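/- arXiv:1011.0513 — 5 statements merged into one kernel-verified Lean document; each statement's English description precedes it below -/
import Mathlib

section
/- Let H be a group with a group-norm L (i.e. L(a) ≥ 0 with equality iff a = e, L(a⁻¹) = L(a), and L(ab) ≤ L(a) + L(b)). Let V be a normed vector space and H act on V by norm-preserving linear maps such that (V,H,L) is a holonomic space. Then the function d_L(u,v) = inf_{a ∈ H} sqrt(L(a)² + ‖a·u − v‖²) is a metric on V. -/
/-- A group-norm on a group `H`. -/
def IsGroupNorm {H : Type*} [Group H] (L : H → ℝ) : Prop :=
  (∀ a, 0 ≤ L a) ∧ (∀ a, L a = 0 ↔ a = 1) ∧ (∀ a, L a⁻¹ = L a) ∧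
    (∀ a b, L (a * b) ≤ L a + L b)

/-- The holonomic distance `d_L(u,v) = inf_{a ∈ H} sqrt(L(a)² + ‖a·u − v‖²)`,
where `H` acts via the homomorphism `φ` by linear isometries. -/
noncomputable def holDist {V H : Type*} [NormedAddCommGroup V] [NormedSpace ℝ V] [Group H]
    (φ : H →* (V ≃ₗᵢ[ℝ] V)) (L : H → ℝ) (u v : V) : ℝ :=
  ⨅ a : H, Real.sqrt (L a ^ 2 + ‖φ a u - v‖ ^ 2)

/-- `(V, H, L)` is a holonomic space: `L` is a group-norm and for every `u ∈ V` there
is `R > 0` such that `‖v−w‖² − ‖a·v−w‖² ≤ L(a)²` whenever `‖u−v‖, ‖u−w‖ < R`. -/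
def IsHolonomicSpace {V H : Type*} [NormedAddCommGroup V] [NormedSpace ℝ V] [Group H]
    (φ : H →* (V ≃ₗᵢ[ℝ] V)) (L : H → ℝ) : Prop :=
  IsGroupNorm L ∧ ∀ u : V, ∃ R > (0:ℝ), ∀ (v w : V) (a : H),
    ‖u - v‖ < R → ‖u - w‖ < R → ‖v - w‖ ^ 2 - ‖φ a v - w‖ ^ 2 ≤ L a ^ 2

/-- Minkowski-type inequality for `√(x²+y²)`. -/
lemma sqrt_sq_add_sq_add_le {p q r s : ℝ} (hp : 0 ≤ p) (hq : 0 ≤ q) (hr : 0 ≤ r) (hs : 0 ≤ s) :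
    Real.sqrt ((p + q) ^ 2 + (r + s) ^ 2) ≤
      Real.sqrt (p ^ 2 + r ^ 2) + Real.sqrt (q ^ 2 + s ^ 2) := by
  set x := Real.sqrt (p ^ 2 + r ^ 2) with hxdef
  set y := Real.sqrt (q ^ 2 + s ^ 2) with hydef
  have hx0 : 0 ≤ x := Real.sqrt_nonneg _
  have hy0 : 0 ≤ y := Real.sqrt_nonneg _
  have hx : x ^ 2 = p ^ 2 + r ^ 2 := Real.sq_sqrt (by positivity)
  have hy : y ^ 2 = q ^ 2 + s ^ 2 := Real.sq_sqrt (by positivity)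
  have hxy : p * q + r * s ≤ x * y := by
    have h1 : x * y = Real.sqrt ((p ^ 2 + r ^ 2) * (q ^ 2 + s ^ 2)) := by
      rw [Real.sqrt_mul (by positivity)]
    have h2 : (p * q + r * s) ^ 2 ≤ (p ^ 2 + r ^ 2) * (q ^ 2 + s ^ 2) := by
      nlinarith [sq_nonneg (p * s - r * q)]
    calc p * q + r * s = Real.sqrt ((p * q + r * s) ^ 2) :=
          (Real.sqrt_sq (by positivity)).symm
      _ ≤ x * y := by rw [h1]; exact Real.sqrt_le_sqrt h2
  calc Real.sqrt ((p + q) ^ 2 + (r + s) ^ 2) ≤ Real.sqrt ((x + y) ^ 2) :=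
        Real.sqrt_le_sqrt (by nlinarith)
    _ = x + y := Real.sqrt_sq (by positivity)

/-- for a holonomic space `(V,H,L)` the function `d_L` is a metric on `V`. -/
theorem holDist_isMetric {V H : Type*} [NormedAddCommGroup V] [NormedSpace ℝ V] [Group H]
    (φ : H →* (V ≃ₗᵢ[ℝ] V)) (L : H → ℝ) (hol : IsHolonomicSpace φ L) :
    (∀ u v, 0 ≤ holDist φ L u v) ∧
    (∀ u v, holDist φ L u v = 0 ↔ u = v) ∧
    (∀ u v, holDist φ L u v = holDist φ L v u) ∧
    (∀ u v w, holDist φ L u w ≤ holDist φ L u v + holDist φ L v w) := by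
  obtain ⟨⟨hL0, hLe, hLinv, hLmul⟩, hax⟩ := hol
  have hL1 : L 1 = 0 := (hLe 1).mpr rfl
  have hbdd : ∀ u v : V, BddBelow (Set.range fun a : H =>
      Real.sqrt (L a ^ 2 + ‖φ a u - v‖ ^ 2)) := by
    intro u v
    exact ⟨0, by rintro x ⟨a, rfl⟩; exact Real.sqrt_nonneg _⟩
  have hnn : ∀ u v, 0 ≤ holDist φ L u v := fun u v =>
    le_ciInf fun a => Real.sqrt_nonneg _
  have hdiag : ∀ u : V, holDist φ L u u = 0 := by
    intro u
    refine le_antisymm ?_ (hnn u u)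
    have h := ciInf_le (hbdd u u) (1 : H)
    simpa [holDist, hL1] using h
  -- symmetry
  have hsymm_le : ∀ u v : V, holDist φ L u v ≤ holDist φ L v u := by
    intro u v
    refine le_ciInf fun a => ?_
    have h := ciInf_le (hbdd u v) a⁻¹
    refine le_trans h (le_of_eq ?_)
    have hnorm : ‖φ a⁻¹ u - v‖ = ‖φ a v - u‖ := by
      have : φ a (φ a⁻¹ u - v) = u - φ a v := by
        simp [map_sub, ← map_mul, hL1]
      calc ‖φ a⁻¹ u - v‖ = ‖φ a (φ a⁻¹ u - v)‖ := ((φ a).norm_map _).symm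
        _ = ‖u - φ a v‖ := by rw [this]
        _ = ‖φ a v - u‖ := norm_sub_rev _ _
    rw [hLinv, hnorm]
  have hsymm : ∀ u v, holDist φ L u v = holDist φ L v u := fun u v =>
    le_antisymm (hsymm_le u v) (hsymm_le v u)
  -- positivity
  have hzero : ∀ u v : V, holDist φ L u v = 0 → u = v := by
    intro u v h0
    obtain ⟨R, hR, hball⟩ := hax 0
    set t : ℝ := R / (R + 1 + ‖u‖ + ‖v‖) with ht
    have hden : (0:ℝ) < R + 1 + ‖u‖ + ‖v‖ := by positivity
    have ht0 : 0 < t := by positivity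
    have ht1 : t ≤ 1 := by
      rw [div_le_one hden]; nlinarith [norm_nonneg u, norm_nonneg v]
    have htu : t * ‖u‖ < R := by
      rw [ht, div_mul_eq_mul_div, div_lt_iff₀ hden]
      nlinarith [norm_nonneg u, norm_nonneg v]
    have htv : t * ‖v‖ < R := by
      rw [ht, div_mul_eq_mul_div, div_lt_iff₀ hden]
      nlinarith [norm_nonneg u, norm_nonneg v]
    have key : ∀ a : H, t * ‖u - v‖ ≤ Real.sqrt (L a ^ 2 + ‖φ a u - v‖ ^ 2) := by
      intro a
      have h1 : ‖(0:V) - t • u‖ < R := by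
        rw [zero_sub, norm_neg, norm_smul, Real.norm_of_nonneg ht0.le]; exact htu
      have h2 : ‖(0:V) - t • v‖ < R := by
        rw [zero_sub, norm_neg, norm_smul, Real.norm_of_nonneg ht0.le]; exact htv
      have h3 := hball (t • u) (t • v) a h1 h2
      have e1 : ‖t • u - t • v‖ = t * ‖u - v‖ := by
        rw [← smul_sub, norm_smul, Real.norm_of_nonneg ht0.le]
      have e2 : ‖φ a (t • u) - t • v‖ = t * ‖φ a u - v‖ := by
        rw [map_smul, ← smul_sub, norm_smul, Real.norm_of_nonneg ht0.le]
      rw [e1, e2] at h3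
      refine Real.le_sqrt_of_sq_le ?_
      have h1t : t ^ 2 ≤ 1 := by nlinarith
      have hsq : t ^ 2 * ‖φ a u - v‖ ^ 2 ≤ ‖φ a u - v‖ ^ 2 := by
        nlinarith [mul_le_mul_of_nonneg_right h1t (sq_nonneg ‖φ a u - v‖)]
      nlinarith [hsq, h3]
    have h4 : t * ‖u - v‖ ≤ 0 := h0 ▸ le_ciInf key
    have h5 : ‖u - v‖ = 0 := by nlinarith [norm_nonneg (u - v)]
    exact sub_eq_zero.mp (norm_eq_zero.mp h5)
  have heq : ∀ u v, holDist φ L u v = 0 ↔ u = v := by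
    intro u v
    exact ⟨hzero u v, fun h => h ▸ hdiag u⟩
  -- triangle inequality
  have htri : ∀ u v w, holDist φ L u w ≤ holDist φ L u v + holDist φ L v w := by
    intro u v w
    rw [show holDist φ L u v + holDist φ L v w = holDist φ L v w + holDist φ L u v from
      add_comm _ _]
    refine le_ciInf_add_ciInf fun a b => ?_
    refine le_trans (ciInf_le (hbdd u w) (a * b)) ?_
    have hcomp : φ (a * b) u = φ a (φ b u) := by
      rw [map_mul]; rfl
    have hnorm : ‖φ (a * b) u - w‖ ≤ ‖φ a v - w‖ + ‖φ b u - v‖ := by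
      rw [hcomp]
      calc ‖φ a (φ b u) - w‖ = ‖(φ a (φ b u) - φ a v) + (φ a v - w)‖ := by abel_nf
        _ ≤ ‖φ a (φ b u) - φ a v‖ + ‖φ a v - w‖ := norm_add_le _ _
        _ = ‖φ b u - v‖ + ‖φ a v - w‖ := by
            rw [← map_sub, (φ a).norm_map]
        _ = ‖φ a v - w‖ + ‖φ b u - v‖ := add_comm _ _
    calc Real.sqrt (L (a * b) ^ 2 + ‖φ (a * b) u - w‖ ^ 2)
        ≤ Real.sqrt ((L a + L b) ^ 2 + (‖φ a v - w‖ + ‖φ b u - v‖) ^ 2) := by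
          refine Real.sqrt_le_sqrt (add_le_add ?_ ?_)
          · exact pow_le_pow_left₀ (hL0 _) (hLmul a b) 2
          · exact pow_le_pow_left₀ (norm_nonneg _) hnorm 2
      _ ≤ Real.sqrt (L a ^ 2 + ‖φ a v - w‖ ^ 2) + Real.sqrt (L b ^ 2 + ‖φ b u - v‖ ^ 2) :=
          sqrt_sq_add_sq_add_le (hL0 a) (hL0 b) (norm_nonneg _) (norm_nonneg _)
  exact ⟨hnn, heq, hsymm, htri⟩
end

section
/- Let V be a normed vector space, H a group of norm-preserving linear maps of V, and L : H → ℝ a group-norm, with d_L(u,v) = inf_{a ∈ H} sqrt(L(a)² + ‖a·u−v‖²). For fixed u,v,u',v' ∈ V with all norms < r, if |‖a·u−v‖ − ‖a·u'−v'‖| < η for all a ∈ H and η ≤ 1, then |d_L(u,v) − d_L(u',v')| ≤ η + 2·sqrt(r·η). -/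
lemma sqrt_add_le' (x y : ℝ) (hx : 0 ≤ x) (hy : 0 ≤ y) :
    Real.sqrt (x + y) ≤ Real.sqrt x + Real.sqrt y := by
  have h1 := Real.sq_sqrt hx
  have h2 := Real.sq_sqrt hy
  have h3 := Real.sqrt_nonneg x
  have h4 := Real.sqrt_nonneg y
  have : x + y ≤ (Real.sqrt x + Real.sqrt y) ^ 2 := by nlinarith
  calc Real.sqrt (x + y) ≤ Real.sqrt ((Real.sqrt x + Real.sqrt y) ^ 2) :=
        Real.sqrt_le_sqrt this
    _ = Real.sqrt x + Real.sqrt y := Real.sqrt_sq (by positivity)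

lemma key_ineq (x a b r η : ℝ) (ha : 0 ≤ a) (hb : 0 ≤ b) (hη : 0 ≤ η) (hr : 0 ≤ r)
    (hab : b ≤ a + η) (har : a ≤ 2 * r) :
    Real.sqrt (x ^ 2 + b ^ 2) ≤ Real.sqrt (x ^ 2 + a ^ 2) + (η + 2 * Real.sqrt (r * η)) := by
  have hb2 : b ^ 2 ≤ a ^ 2 + (4 * r * η + η ^ 2) := by nlinarith
  have h1 : Real.sqrt (x ^ 2 + b ^ 2) ≤ Real.sqrt ((x ^ 2 + a ^ 2) + (4 * r * η + η ^ 2)) :=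
    Real.sqrt_le_sqrt (by linarith)
  have h2 : Real.sqrt ((x ^ 2 + a ^ 2) + (4 * r * η + η ^ 2)) ≤
      Real.sqrt (x ^ 2 + a ^ 2) + Real.sqrt (4 * r * η + η ^ 2) :=
    sqrt_add_le' _ _ (by positivity) (by positivity)
  have h3 : Real.sqrt (4 * r * η + η ^ 2) ≤ Real.sqrt (4 * (r * η)) + Real.sqrt (η ^ 2) := by
    have := sqrt_add_le' (4 * (r * η)) (η ^ 2) (by positivity) (by positivity)
    calc Real.sqrt (4 * r * η + η ^ 2) = Real.sqrt (4 * (r * η) + η ^ 2) := by ring_nf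
      _ ≤ _ := this
  have h4 : Real.sqrt (4 * (r * η)) = 2 * Real.sqrt (r * η) := by
    rw [show (4 : ℝ) * (r * η) = 2 ^ 2 * (r * η) by ring, Real.sqrt_mul (by positivity),
      Real.sqrt_sq (by norm_num)]
  have h5 : Real.sqrt (η ^ 2) = η := Real.sqrt_sq hη
  linarith

/-- if `|‖a·u−v‖ − ‖a·u'−v'‖| < η` for all `a ∈ H`, with `η ≤ 1` and all
four vectors of norm `< r`, then `|d_L(u,v) − d_L(u',v')| ≤ η + 2·sqrt(r·η)`. -/
theorem holDist_estimate {V H : Type*} [NormedAddCommGroup V] [NormedSpace ℝ V] [Group H]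
    (φ : H →* (V ≃ₗᵢ[ℝ] V)) (L : H → ℝ) (hL : IsGroupNorm L)
    (r η : ℝ) (hη : η ≤ 1) (u v u' v' : V)
    (hu : ‖u‖ < r) (hv : ‖v‖ < r) (hu' : ‖u'‖ < r) (hv' : ‖v'‖ < r)
    (hclose : ∀ a : H, |‖φ a u - v‖ - ‖φ a u' - v'‖| < η) :
    |holDist φ L u v - holDist φ L u' v'| ≤ η + 2 * Real.sqrt (r * η) := by
  have hr : 0 ≤ r := le_trans (norm_nonneg u) hu.le
  have hη0 : 0 ≤ η := le_trans (abs_nonneg _) (hclose 1).le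
  set c := η + 2 * Real.sqrt (r * η) with hc
  have bdd : ∀ (w z : V), BddBelow (Set.range fun a : H =>
      Real.sqrt (L a ^ 2 + ‖φ a w - z‖ ^ 2)) := by
    intro w z
    exact ⟨0, by rintro x ⟨a, rfl⟩; exact Real.sqrt_nonneg _⟩
  -- pointwise bound both ways
  have main : ∀ (w z w' z' : V), ‖w‖ < r → ‖z‖ < r →
      (∀ a : H, ‖φ a w' - z'‖ ≤ ‖φ a w - z‖ + η) →
      holDist φ L w' z' ≤ holDist φ L w z + c := by
    intro w z w' z' hw hz hcl
    have : holDist φ L w' z' - c ≤ holDist φ L w z := by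
      apply le_ciInf
      intro a
      rw [sub_le_iff_le_add]
      calc holDist φ L w' z' ≤ Real.sqrt (L a ^ 2 + ‖φ a w' - z'‖ ^ 2) :=
            ciInf_le (bdd w' z') a
        _ ≤ Real.sqrt (L a ^ 2 + ‖φ a w - z‖ ^ 2) + c := by
            apply key_ineq _ _ _ _ _ (norm_nonneg _) (norm_nonneg _) hη0 hr (hcl a)
            calc ‖φ a w - z‖ ≤ ‖φ a w‖ + ‖z‖ := norm_sub_le _ _
              _ = ‖w‖ + ‖z‖ := by rw [(φ a).norm_map]
              _ ≤ 2 * r := by linarith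
    linarith
  have h1 : holDist φ L u' v' ≤ holDist φ L u v + c :=
    main u v u' v' hu hv fun a => by have := hclose a; cases abs_sub_le_iff.mp this.le; linarith
  have h2 : holDist φ L u v ≤ holDist φ L u' v' + c := by
    apply main u' v' u v hu' hv'
    intro a
    have := hclose a
    cases abs_sub_le_iff.mp this.le
    linarith
  rw [abs_sub_le_iff]
  constructor <;> linarith
end

section
/- Let (V, H, L_i) be a sequence of holonomic spaces on a fixed finite-dimensional normed vector space V with a fixed group H ≤ O(V), whose semi-metrics d_i converge uniformly on compact sets to a semi-metric d_∞. Suppose there is c > 0 with c ≤ HolRad_i(0) for all i, where HolRad_i(0) ≤ L_i(a)/‖a − id_V‖ for every a ∈ H. Then d_∞ is nondegenerate, i.e. d_∞(u,v) = 0 implies u = v; hence d_∞ is a metric. -/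
open Filter Topology

def IsSemiMetric {V : Type*} (d : V → V → ℝ) : Prop :=
  (∀ u v, 0 ≤ d u v) ∧ (∀ u, d u u = 0) ∧ (∀ u v, d u v = d v u) ∧
    (∀ u v w, d u w ≤ d u v + d v w)

/-- The holonomy radius at `0` of the holonomic space `(V, H, L)`. -/
noncomputable def holRadZero {V H : Type*} [NormedAddCommGroup V] [NormedSpace ℝ V] [Group H]
    (φ : H →* (V ≃ₗᵢ[ℝ] V)) (L : H → ℝ) : ℝ :=
  sSup {R : ℝ | 0 < R ∧ ∀ u v : V, ‖u‖ < R → ‖v‖ < R → holDist φ L u v = ‖u - v‖}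

lemma holDist_le' {V H : Type*} [NormedAddCommGroup V] [NormedSpace ℝ V] [Group H]
    (φ : H →* (V ≃ₗᵢ[ℝ] V)) (L : H → ℝ) (u v : V) (a : H) :
    holDist φ L u v ≤ Real.sqrt (L a ^ 2 + ‖φ a u - v‖ ^ 2) :=
  ciInf_le ⟨0, by rintro x ⟨b, rfl⟩; exact Real.sqrt_nonneg _⟩ a

lemma key_bound {V H : Type*} [NormedAddCommGroup V] [NormedSpace ℝ V] [Group H]
    (φ : H →* (V ≃ₗᵢ[ℝ] V)) (L : H → ℝ) (hL0 : ∀ a, 0 ≤ L a)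
    (c : ℝ) (hc : 0 < c) (hrad : c ≤ holRadZero φ L)
    (a : H) (w : V) (hw : ‖w‖ < c / 2) :
    ‖w - φ a w‖ ≤ L a := by
  set S := {R : ℝ | 0 < R ∧ ∀ u v : V, ‖u‖ < R → ‖v‖ < R → holDist φ L u v = ‖u - v‖} with hS
  have hne : S.Nonempty := by
    by_contra h
    rw [Set.not_nonempty_iff_eq_empty] at h
    have : holRadZero φ L = 0 := by
      rw [holRadZero, ← hS, h, Real.sSup_empty]
    linarith [hrad]
  obtain ⟨R, hRS, hR⟩ := exists_lt_of_lt_csSup hne (lt_of_lt_of_le (half_lt_self hc) hrad)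
  have hnm : ‖φ a w‖ = ‖w‖ := (φ a).norm_map w
  have heq := hRS.2 w (φ a w) (hw.trans hR) (by rw [hnm]; exact hw.trans hR)
  calc ‖w - φ a w‖ = holDist φ L w (φ a w) := heq.symm
    _ ≤ Real.sqrt (L a ^ 2 + ‖φ a w - φ a w‖ ^ 2) := holDist_le' φ L w (φ a w) a
    _ = L a := by
        rw [sub_self, norm_zero]
        simp [Real.sqrt_sq (hL0 a)]

lemma key_bound' {V H : Type*} [NormedAddCommGroup V] [NormedSpace ℝ V] [Group H]
    (φ : H →* (V ≃ₗᵢ[ℝ] V)) (L : H → ℝ) (hL0 : ∀ a, 0 ≤ L a)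
    (c : ℝ) (hc : 0 < c) (hrad : c ≤ holRadZero φ L)
    (a : H) (u : V) :
    (c / (4 * (‖u‖ + 1))) * ‖u - φ a u‖ ≤ L a := by
  have hu1 : (0:ℝ) < ‖u‖ + 1 := by positivity
  set t : ℝ := c / (4 * (‖u‖ + 1)) with ht
  have htpos : 0 < t := by positivity
  have hw : ‖t • u‖ < c / 2 := by
    rw [norm_smul, Real.norm_eq_abs, abs_of_pos htpos, ht]
    rw [div_mul_eq_mul_div, div_lt_iff₀ (by positivity)]
    nlinarith [norm_nonneg u]
  have := key_bound φ L hL0 c hc hrad a (t • u) hw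
  rw [(φ a).map_smul, ← smul_sub, norm_smul, Real.norm_eq_abs, abs_of_pos htpos] at this
  exact this

/-- if a convergent sequence of holonomic spaces `(V, H, Lᵢ)` has holonomy radii
at `0` uniformly bounded below by `c > 0`, then the limit semi-metric `dLim` is
nondegenerate, hence a metric. -/
theorem limit_metric_of_holRad_lower_bound {V H : Type*} [NormedAddCommGroup V]
    [NormedSpace ℝ V] [FiniteDimensional ℝ V] [Group H] (φ : H →* (V ≃ₗᵢ[ℝ] V))
    (L : ℕ → H → ℝ) (hol : ∀ i, IsHolonomicSpace φ (L i))
    (dLim : V → V → ℝ) (hsemiLim : IsSemiMetric dLim)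
    (hconv : ∀ K : Set (V × V), IsCompact K →
      TendstoUniformlyOn (fun i (p : V × V) => holDist φ (L i) p.1 p.2)
        (fun p => dLim p.1 p.2) atTop K)
    (c : ℝ) (hc : 0 < c) (hrad : ∀ i, c ≤ holRadZero φ (L i)) :
    (∀ u v : V, dLim u v = 0 → u = v) ∧
    (∀ u v, 0 ≤ dLim u v) ∧ (∀ u v, dLim u v = 0 ↔ u = v) ∧
    (∀ u v, dLim u v = dLim v u) ∧ (∀ u v w, dLim u w ≤ dLim u v + dLim v w) := by
  have nondeg : ∀ u v : V, dLim u v = 0 → u = v := by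
    intro u v h0
    have hconv1 : Tendsto (fun i => holDist φ (L i) u v) atTop (𝓝 (0:ℝ)) := by
      have := (hconv {(u, v)} isCompact_singleton).tendsto_at (Set.mem_singleton _)
      rwa [h0] at this
    set t : ℝ := c / (4 * (‖u‖ + 1)) with ht
    have htpos : 0 < t := by positivity
    -- show ‖u - v‖ ≤ δ * (1/t + 1) for every δ > 0
    have hmain : ∀ δ : ℝ, 0 < δ → ‖u - v‖ ≤ δ * (1 / t + 1) := by
      intro δ hδ
      obtain ⟨i, hi⟩ := (hconv1.eventually_lt_const hδ).exists
      obtain ⟨a, ha⟩ := exists_lt_of_ciInf_lt hi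
      have hLa0 := (hol i).1.1 a
      have hLa : L i a < δ := by
        calc L i a = Real.sqrt ((L i a) ^ 2) := (Real.sqrt_sq hLa0).symm
          _ ≤ Real.sqrt ((L i a) ^ 2 + ‖φ a u - v‖ ^ 2) :=
              Real.sqrt_le_sqrt (le_add_of_nonneg_right (by positivity))
          _ < δ := ha
      have hv : ‖φ a u - v‖ < δ := by
        calc ‖φ a u - v‖ = Real.sqrt (‖φ a u - v‖ ^ 2) := (Real.sqrt_sq (norm_nonneg _)).symm
          _ ≤ Real.sqrt ((L i a) ^ 2 + ‖φ a u - v‖ ^ 2) :=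
              Real.sqrt_le_sqrt (le_add_of_nonneg_left (by positivity))
          _ < δ := ha
      have hkey := key_bound' φ (L i) (hol i).1.1 c hc (hrad i) a u
      rw [← ht] at hkey
      have h1 : ‖u - φ a u‖ ≤ δ / t := by
        rw [le_div_iff₀ htpos]
        nlinarith
      calc ‖u - v‖ ≤ ‖u - φ a u‖ + ‖φ a u - v‖ := norm_sub_le_norm_sub_add_norm_sub u _ v
        _ ≤ δ / t + δ := add_le_add h1 hv.le
        _ = δ * (1 / t + 1) := by ring
    have huv : ‖u - v‖ = 0 := by
      by_contra hne
      have hpos : 0 < ‖u - v‖ := lt_of_le_of_ne (norm_nonneg _) (Ne.symm hne)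
      have hq : 0 < 1 / t + 1 := by positivity
      have := hmain (‖u - v‖ / (2 * (1 / t + 1))) (by positivity)
      have heq2 : ‖u - v‖ / (2 * (1 / t + 1)) * (1 / t + 1) = ‖u - v‖ / 2 := by
        field_simp
      rw [heq2] at this
      linarith
    rw [← sub_eq_zero]
    exact norm_eq_zero.mp huv
  refine ⟨nondeg, hsemiLim.1, fun u v => ⟨nondeg u v, ?_⟩, hsemiLim.2.2.1, hsemiLim.2.2.2⟩
  rintro rfl
  exact hsemiLim.2.1 u
end

section
/- Let X be a locally compact connected metric space and (φ_i) a sequence of isometries of X. If there is a point x ∈ X such that (φ_i(x)) converges, then there is a subsequence (φ_{i_k}) converging uniformly on compact sets to an isometry of X. -/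
open Filter Topology Metric Set

section Aux
variable {X : Type*} [MetricSpace X] [LocallyCompactSpace X]

/-- compactness radius, capped at 1 -/
noncomputable def cRad (p : X) : ℝ := sSup {t | t ≤ 1 ∧ IsCompact (Metric.closedBall p t)}

lemma cRad_set_nonempty (p : X) : {t | t ≤ 1 ∧ IsCompact (Metric.closedBall p t)}.Nonempty :=
  ⟨0, zero_le_one, by simp [Metric.closedBall_zero, isCompact_singleton]⟩

lemma cRad_set_bdd (p : X) : BddAbove {t | t ≤ 1 ∧ IsCompact (Metric.closedBall p t)} :=
  ⟨1, fun _ ht => ht.1⟩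

lemma le_cRad {p : X} {t : ℝ} (ht : t ≤ 1) (hc : IsCompact (Metric.closedBall p t)) :
    t ≤ cRad p := le_csSup (cRad_set_bdd p) ⟨ht, hc⟩

lemma cRad_le {p : X} {a : ℝ}
    (h : ∀ t, t ≤ 1 → IsCompact (Metric.closedBall p t) → t ≤ a) : cRad p ≤ a :=
  csSup_le (cRad_set_nonempty p) fun _ ht => h _ ht.1 ht.2

lemma cRad_pos (p : X) : 0 < cRad p := by
  obtain ⟨r, hr, hc⟩ := exists_isCompact_closedBall p
  have hmem : min r 1 ∈ {t | t ≤ 1 ∧ IsCompact (Metric.closedBall p t)} :=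
    ⟨min_le_right _ _, hc.of_isClosed_subset Metric.isClosed_closedBall
      (Metric.closedBall_subset_closedBall (min_le_left _ _))⟩
  exact lt_of_lt_of_le (lt_min hr one_pos) (le_csSup (cRad_set_bdd p) hmem)

lemma cRad_le_one (p : X) : cRad p ≤ 1 :=
  csSup_le (cRad_set_nonempty p) fun _ ht => ht.1

lemma isCompact_closedBall_of_lt_cRad {p : X} {t : ℝ} (h : t < cRad p) :
    IsCompact (Metric.closedBall p t) := by
  obtain ⟨s, hs, hts⟩ := exists_lt_of_lt_csSup (cRad_set_nonempty p) h
  exact hs.2.of_isClosed_subset Metric.isClosed_closedBall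
    (Metric.closedBall_subset_closedBall hts.le)

lemma cRad_sub_dist_le (p q : X) : cRad p - dist p q ≤ cRad q := by
  have h : cRad p ≤ cRad q + dist p q := by
    refine cRad_le fun t ht1 htc => ?_
    have hle : t - dist p q ≤ cRad q := by
      refine le_cRad (by linarith [dist_nonneg (x := p) (y := q)]) ?_
      refine htc.of_isClosed_subset Metric.isClosed_closedBall ?_
      exact Metric.closedBall_subset_closedBall' (by rw [dist_comm q p]; linarith)
    linarith
  linarith

lemma lipschitz_cRad : LipschitzWith 1 (cRad (X := X)) := by
  refine LipschitzWith.of_dist_le_mul fun p q => ?_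
  rw [Real.dist_eq, NNReal.coe_one, one_mul, abs_sub_le_iff]
  constructor
  · linarith [cRad_sub_dist_le p q]
  · linarith [cRad_sub_dist_le q p, dist_comm p q]

lemma cRad_isometryEquiv (e : X ≃ᵢ X) (p : X) : cRad (e p) = cRad p := by
  have key : ∀ (f : X ≃ᵢ X) (q : X), cRad q ≤ cRad (f q) := by
    intro f q
    refine cRad_le fun t ht1 htc => ?_
    refine le_cRad ht1 ?_
    rw [← f.image_closedBall]
    exact htc.image f.continuous
  refine le_antisymm ?_ (key e p)
  have := key e.symm (e p)
  simpa using this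

/-- Master covering lemma: the closure of a set of points lying within the local
compactness radius of a compact set is compact. -/
lemma key_cover {C : Set X} (hC : IsCompact C) :
    IsCompact (closure {p | ∃ c ∈ C, dist p c ≤ cRad c / 8}) := by
  have hcover : C ⊆ ⋃ c ∈ C, Metric.ball c (cRad c / 8) := fun c hc =>
    Set.mem_biUnion hc (by rw [Metric.mem_ball, dist_self]; linarith [cRad_pos c])
  obtain ⟨t, htC, htfin, htcov⟩ :=
    hC.elim_finite_subcover_image (fun c _ => Metric.isOpen_ball) hcover
  have hKc : IsCompact (⋃ c ∈ t, Metric.closedBall c (cRad c / 2)) :=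
    htfin.isCompact_biUnion fun c _ =>
      isCompact_closedBall_of_lt_cRad (by linarith [cRad_pos c])
  have hKcl : IsClosed (⋃ c ∈ t, Metric.closedBall c (cRad c / 2)) :=
    htfin.isClosed_biUnion fun c _ => Metric.isClosed_closedBall
  refine hKc.of_isClosed_subset isClosed_closure (closure_minimal ?_ hKcl)
  rintro p ⟨c, hcC, hpc⟩
  obtain ⟨c', hc't, hcc'⟩ := Set.mem_iUnion₂.1 (htcov hcC)
  rw [Metric.mem_ball] at hcc'
  refine Set.mem_biUnion hc't ?_
  have h1 : cRad c ≤ cRad c' + dist c c' := by linarith [cRad_sub_dist_le c c']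
  have h2 : cRad c ≤ cRad c' + cRad c' / 8 := by linarith
  rw [Metric.mem_closedBall]
  calc dist p c' ≤ dist p c + dist c c' := dist_triangle _ _ _
    _ ≤ cRad c / 8 + cRad c' / 8 := by linarith
    _ ≤ cRad c' / 2 := by linarith [cRad_pos c']

end Aux

section Main
variable {X : Type*} [MetricSpace X] [LocallyCompactSpace X]

lemma orbit_precompact [ConnectedSpace X] (φ : ℕ → X → X)
    (hiso : ∀ i, Isometry (φ i)) (hbij : ∀ i, Function.Bijective (φ i))
    (x : X) (hx : ∃ l : X, Tendsto (fun i => φ i x) atTop (𝓝 l)) :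
    ∀ y, IsCompact (closure (Set.range fun i => φ i y)) := by
  set E : ℕ → X ≃ᵢ X := fun i =>
    ⟨Equiv.ofBijective (φ i) (hbij i), hiso i⟩ with hE
  have hEapp : ∀ i y, E i y = φ i y := fun i y => rfl
  have hrad : ∀ i y, cRad (φ i y) = cRad y := fun i y => cRad_isometryEquiv (E i) y
  set S : Set X := {y | IsCompact (closure (Set.range fun i => φ i y))} with hS
  have hSx : x ∈ S := by
    obtain ⟨l, hl⟩ := hx
    have h1 : IsCompact (insert l (Set.range fun i => φ i x)) := hl.isCompact_insert_range
    exact h1.of_isClosed_subset isClosed_closure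
      (closure_minimal (Set.subset_insert _ _) h1.isClosed)
  have hSopen : IsOpen S := by
    rw [Metric.isOpen_iff]
    intro y hy
    refine ⟨cRad y / 8, by linarith [cRad_pos y], fun z hz => ?_⟩
    rw [Metric.mem_ball] at hz
    have hkey := key_cover (C := closure (Set.range fun i => φ i y)) hy
    refine hkey.of_isClosed_subset isClosed_closure (closure_mono ?_)
    rintro p ⟨i, rfl⟩
    refine ⟨φ i y, subset_closure (Set.mem_range_self i), ?_⟩
    rw [(hiso i).dist_eq, hrad i y]
    linarith
  have hSclosed : IsClosed S := by
    rw [← closure_subset_iff_isClosed]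
    intro y hy
    obtain ⟨y', hy'S, hyy'⟩ := Metric.mem_closure_iff.1 hy (cRad y / 16)
      (by linarith [cRad_pos y])
    have hC' : IsCompact (closure (Set.range fun i => φ i y')) := hy'S
    have hkey := key_cover (C := closure (Set.range fun i => φ i y')) hC'
    refine hkey.of_isClosed_subset isClosed_closure (closure_mono ?_)
    rintro p ⟨i, rfl⟩
    refine ⟨φ i y', subset_closure (Set.mem_range_self i), ?_⟩
    have h1 : cRad (φ i y') = cRad y' := hrad i y'
    have h2 : cRad y - dist y y' ≤ cRad y' := cRad_sub_dist_le y y'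
    rw [(hiso i).dist_eq, h1]
    have := cRad_pos y
    linarith
  have : S = Set.univ := by
    rcases isClopen_iff.1 ⟨hSclosed, hSopen⟩ with h | h
    · exact absurd (h ▸ hSx) (Set.notMem_empty x)
    · exact h
  intro y
  exact (this ▸ Set.mem_univ y : y ∈ S)

lemma sigmaCompact_of_connected [ConnectedSpace X] : SigmaCompactSpace X := by
  obtain ⟨x⟩ : Nonempty X := inferInstance
  set K : ℕ → Set X := fun n =>
    Nat.rec ({x} : Set X) (fun _ Kn => closure {p | ∃ c ∈ Kn, dist p c ≤ cRad c / 8}) n with hK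
  have hKc : ∀ n, IsCompact (K n) := by
    intro n
    induction n with
    | zero => exact isCompact_singleton
    | succ n ih => exact key_cover ih
  have hstep : ∀ n p, (∃ c ∈ K n, dist p c ≤ cRad c / 8) → p ∈ K (n + 1) :=
    fun n p hp => subset_closure hp
  set U : Set X := ⋃ n, K n with hU
  have hUopen : IsOpen U := by
    rw [Metric.isOpen_iff]
    rintro y hy
    obtain ⟨n, hn⟩ := Set.mem_iUnion.1 hy
    refine ⟨cRad y / 8, by linarith [cRad_pos y], fun z hz => ?_⟩
    rw [Metric.mem_ball] at hz
    exact Set.mem_iUnion.2 ⟨n + 1, hstep n z ⟨y, hn, hz.le⟩⟩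
  have hUclosed : IsClosed U := by
    rw [← closure_subset_iff_isClosed]
    intro y hy
    obtain ⟨q, hqU, hyq⟩ := Metric.mem_closure_iff.1 hy (cRad y / 16)
      (by linarith [cRad_pos y])
    obtain ⟨n, hn⟩ := Set.mem_iUnion.1 hqU
    refine Set.mem_iUnion.2 ⟨n + 1, hstep n y ⟨q, hn, ?_⟩⟩
    have := cRad_sub_dist_le y q
    have := cRad_pos y
    linarith
  have hUuniv : U = Set.univ := by
    rcases isClopen_iff.1 ⟨hUclosed, hUopen⟩ with h | h
    · exact absurd (h ▸ Set.mem_iUnion.2 ⟨0, Set.mem_singleton x⟩) (Set.notMem_empty x)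
    · exact h
  exact ⟨⟨K, hKc, hUuniv⟩⟩

end Main

section Extract
variable {X : Type*} [MetricSpace X]

lemma exists_subseq_pointwise [TopologicalSpace.SeparableSpace X] [Nonempty X]
    (φ : ℕ → X → X) (hiso : ∀ i, Isometry (φ i))
    (horb : ∀ y, IsCompact (closure (Set.range fun i => φ i y))) :
    ∃ (ψ : X → X) (σ : ℕ → ℕ), StrictMono σ ∧
      ∀ y, Tendsto (fun k => φ (σ k) y) atTop (𝓝 (ψ y)) := by
  obtain ⟨D, hDcount, hDdense⟩ := TopologicalSpace.exists_countable_dense X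
  haveI : Countable D := hDcount.to_subtype
  -- compactness in the product over D
  set T : Set (D → X) := Set.univ.pi fun d => closure (Set.range fun i => φ i d.1) with hT
  have hTc : IsCompact T := isCompact_univ_pi fun d => horb d.1
  set u : ℕ → D → X := fun i d => φ i d.1 with hu
  have huT : ∀ i, u i ∈ T := fun i => fun d _ => subset_closure (Set.mem_range_self i)
  obtain ⟨g, -, σ, hσ, hg⟩ := hTc.isSeqCompact huT
  have hgd : ∀ d : D, Tendsto (fun k => φ (σ k) d.1) atTop (𝓝 (g d)) := by
    intro d
    have := tendsto_pi_nhds.1 hg d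
    exact this
  -- convergence at every point
  have hconv : ∀ y : X, ∃ l, Tendsto (fun k => φ (σ k) y) atTop (𝓝 l) := by
    intro y
    have hcauchy : CauchySeq fun k => φ (σ k) y := by
      rw [Metric.cauchySeq_iff]
      intro ε hε
      obtain ⟨d, hdD, hyd⟩ := Metric.mem_closure_iff.1 (hDdense y) (ε / 4) (by linarith)
      have hc : CauchySeq fun k => φ (σ k) (⟨d, hdD⟩ : D).1 := (hgd ⟨d, hdD⟩).cauchySeq
      rw [Metric.cauchySeq_iff] at hc
      obtain ⟨N, hN⟩ := hc (ε / 4) (by linarith)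
      refine ⟨N, fun m hm n hn => ?_⟩
      have h1 : dist (φ (σ m) y) (φ (σ m) d) = dist y d := (hiso _).dist_eq _ _
      have h2 : dist (φ (σ n) d) (φ (σ n) y) = dist d y := (hiso _).dist_eq _ _
      calc dist (φ (σ m) y) (φ (σ n) y)
          ≤ dist (φ (σ m) y) (φ (σ m) d) + dist (φ (σ m) d) (φ (σ n) d)
            + dist (φ (σ n) d) (φ (σ n) y) := dist_triangle4 _ _ _ _
        _ < ε := by
            have := hN m hm n hn
            rw [h1, h2, dist_comm d y]
            linarith
    obtain ⟨l, -, hl⟩ := cauchySeq_tendsto_of_isComplete (horb y).isComplete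
      (fun k => subset_closure (Set.mem_range_self (σ k))) hcauchy
    exact ⟨l, hl⟩
  exact ⟨fun y => (hconv y).choose, σ, hσ, fun y => (hconv y).choose_spec⟩

end Extract

lemma isometryEquiv_dist_symm {X : Type*} [MetricSpace X] (e : X ≃ᵢ X) (a b : X) :
    dist (e.symm a) b = dist a (e b) := by
  calc dist (e.symm a) b = dist (e.symm a) (e.symm (e b)) := by rw [e.symm_apply_apply]
    _ = dist a (e b) := e.symm.isometry.dist_eq _ _

/-- on a locally compact connected metric space, a sequence of isometries whose
values at one point converge has a subsequence converging uniformly on compact sets to an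
isometry of the space. -/
theorem isometry_seq_has_convergent_subsequence {X : Type*} [MetricSpace X]
    [LocallyCompactSpace X] [ConnectedSpace X]
    (φ : ℕ → X → X) (hiso : ∀ i, Isometry (φ i)) (hbij : ∀ i, Function.Bijective (φ i))
    (x : X) (hx : ∃ l : X, Tendsto (fun i => φ i x) atTop (𝓝 l)) :
    ∃ (ψ : X → X) (σ : ℕ → ℕ), StrictMono σ ∧ Isometry ψ ∧ Function.Bijective ψ ∧
      ∀ K : Set X, IsCompact K → TendstoUniformlyOn (fun k => φ (σ k)) ψ atTop K := by
  haveI : SigmaCompactSpace X := sigmaCompact_of_connected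
  haveI : SecondCountableTopology X := EMetric.secondCountable_of_sigmaCompact X
  have horb := orbit_precompact φ hiso hbij x hx
  obtain ⟨ψ, σ₁, hσ₁, h1⟩ := exists_subseq_pointwise φ hiso horb
  set E : ℕ → X ≃ᵢ X := fun i => ⟨Equiv.ofBijective (φ i) (hbij i), hiso i⟩ with hE
  have hEapp : ∀ i y, E i y = φ i y := fun i y => rfl
  -- inverse sequence
  set χ : ℕ → X → X := fun k y => (E (σ₁ k)).symm y with hχ
  have hχiso : ∀ k, Isometry (χ k) := fun k => (E (σ₁ k)).symm.isometry
  have hχbij : ∀ k, Function.Bijective (χ k) := fun k => (E (σ₁ k)).symm.bijective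
  have hχconv : ∃ l, Tendsto (fun k => χ k (ψ x)) atTop (𝓝 l) := by
    refine ⟨x, tendsto_iff_dist_tendsto_zero.2 ?_⟩
    have heq : ∀ k, dist (χ k (ψ x)) x = dist (ψ x) (φ (σ₁ k) x) := fun k => by
      rw [show χ k (ψ x) = (E (σ₁ k)).symm (ψ x) from rfl,
        isometryEquiv_dist_symm (E (σ₁ k)) (ψ x) x, hEapp]
    simp only [heq]
    simpa [dist_comm] using tendsto_iff_dist_tendsto_zero.1 (h1 x)
  have horb' := orbit_precompact χ hχiso hχbij (ψ x) hχconv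
  obtain ⟨χL, σ₂, hσ₂, h2⟩ := exists_subseq_pointwise χ hχiso horb'
  set σ : ℕ → ℕ := σ₁ ∘ σ₂ with hσdef
  have hσ : StrictMono σ := hσ₁.comp hσ₂
  have h1' : ∀ y, Tendsto (fun k => φ (σ k) y) atTop (𝓝 (ψ y)) := fun y =>
    (h1 y).comp hσ₂.tendsto_atTop
  -- ψ is an isometry
  have hψiso : Isometry ψ := by
    refine Isometry.of_dist_eq fun a b => ?_
    have hd : Tendsto (fun k => dist (φ (σ k) a) (φ (σ k) b)) atTop
        (𝓝 (dist (ψ a) (ψ b))) := (h1' a).dist (h1' b)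
    have hconst : (fun k => dist (φ (σ k) a) (φ (σ k) b)) = fun _ => dist a b :=
      funext fun k => (hiso (σ k)).dist_eq a b
    rw [hconst] at hd
    exact tendsto_nhds_unique hd tendsto_const_nhds
  -- χL inverts ψ
  have hright : ∀ y, ψ (χL y) = y := by
    intro y
    refine tendsto_nhds_unique (h1' (χL y)) (tendsto_iff_dist_tendsto_zero.2 ?_)
    have heq : ∀ k, dist (φ (σ k) (χL y)) y = dist (χL y) (χ (σ₂ k) y) := by
      intro k
      rw [show χ (σ₂ k) y = (E (σ k)).symm y from rfl, ← hEapp (σ k) (χL y),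
        dist_comm, ← isometryEquiv_dist_symm (E (σ k)) y (χL y), dist_comm]
    simp only [heq]
    have hd : Tendsto (fun k => dist (χL y) (χ (σ₂ k) y)) atTop
        (𝓝 (dist (χL y) (χL y))) := tendsto_const_nhds.dist (h2 y)
    simpa using hd
  have hleft : ∀ y, χL (ψ y) = y := by
    intro y
    refine tendsto_nhds_unique (h2 (ψ y)) (tendsto_iff_dist_tendsto_zero.2 ?_)
    have heq : ∀ k, dist (χ (σ₂ k) (ψ y)) y = dist (ψ y) (φ (σ k) y) := by
      intro k
      rw [show χ (σ₂ k) (ψ y) = (E (σ k)).symm (ψ y) from rfl,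
        isometryEquiv_dist_symm, hEapp]
    simp only [heq]
    have hd : Tendsto (fun k => dist (ψ y) (φ (σ k) y)) atTop
        (𝓝 (dist (ψ y) (ψ y))) := tendsto_const_nhds.dist (h1' y)
    simpa using hd
  have hψbij : Function.Bijective ψ :=
    Function.bijective_iff_has_inverse.2 ⟨χL, hleft, hright⟩
  refine ⟨ψ, σ, hσ, hψiso, hψbij, fun K hK => ?_⟩
  -- uniform convergence on compact sets
  rw [Metric.tendstoUniformlyOn_iff]
  intro ε hε
  have hcover : K ⊆ ⋃ q ∈ K, Metric.ball q (ε / 4) := fun q hq =>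
    Set.mem_biUnion hq (by rw [Metric.mem_ball, dist_self]; linarith)
  obtain ⟨t, htK, htfin, htcov⟩ :=
    hK.elim_finite_subcover_image (fun q _ => Metric.isOpen_ball) hcover
  have hev : ∀ᶠ n in atTop, ∀ q ∈ t, dist (ψ q) (φ (σ n) q) < ε / 4 := by
    rw [eventually_all_finite htfin]
    intro q hq
    have hd : Tendsto (fun n => dist (ψ q) (φ (σ n) q)) atTop (𝓝 0) := by
      have h := (tendsto_const_nhds (x := ψ q) (f := atTop (α := ℕ))).dist (h1' q)
      simpa using h
    filter_upwards [hd.eventually (eventually_lt_nhds (by linarith : (0:ℝ) < ε / 4))]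
      with n hn using hn
  filter_upwards [hev] with n hn p hp
  obtain ⟨q, hqt, hpq⟩ := Set.mem_iUnion₂.1 (htcov hp)
  rw [Metric.mem_ball] at hpq
  calc dist (ψ p) (φ (σ n) p)
      ≤ dist (ψ p) (ψ q) + dist (ψ q) (φ (σ n) q) + dist (φ (σ n) q) (φ (σ n) p) :=
        dist_triangle4 _ _ _ _
    _ < ε := by
        rw [hψiso.dist_eq, (hiso (σ n)).dist_eq, dist_comm q p]
        have := hn q hqt
        linarith
end

section
/- Let (M,g) be a compact Riemannian manifold of dimension n, with holonomy group H = Hol_p(g) ≤ O(n) at a point p and length norm L: H → ℝ (infimum of lengths of loops at p with given holonomy). For the rescaled metrics g_i = g/i², the holonomic spaces at p are isometric to (V, H, L/i) with norm ‖·‖/i, and via the rescaling map u ↦ i·u, isometric to (V, H, L_i) with the original norm where L_i = L/i. Consequently the semi-metrics d_{L_i}(u,v) = inf_{a∈H} sqrt(L(a)²/i² + ‖a·u − v‖²) converge uniformly on compact sets to the semi-metric d_∞(u,v) = inf_{a ∈ cl(H)} ‖a·u − v‖, whose associated quotient metric space is ℝⁿ/cl(H) where cl(H) is the closure of H in O(n).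 -/
open Filter Topology

private lemma sqrt_sq_add_sq_le {x y : ℝ} (hx : 0 ≤ x) (hy : 0 ≤ y) :
    Real.sqrt (x ^ 2 + y ^ 2) ≤ x + y :=
  (Real.sqrt_le_sqrt (by nlinarith)).trans_eq (Real.sqrt_sq (by linarith))

private lemma le_sqrt_sq_add_sq (x y : ℝ) (hy : 0 ≤ y) :
    y ≤ Real.sqrt (x ^ 2 + y ^ 2) := by
  nlinarith [Real.sq_sqrt (show (0:ℝ) ≤ x ^ 2 + y ^ 2 by positivity),
    Real.sqrt_nonneg (x ^ 2 + y ^ 2)]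

/-- for a subgroup `H ≤ O(n)` with a bounded group-norm `L` (the length norm
of the holonomy group of a compact manifold), rescaling the metric by `1/i²` rescales the
holonomic data to `(V, H, L/i)` with norm `‖·‖/i`, which via the map `u ↦ i·u` is isometric
to `(V, H, L/i)` with the original norm.  The resulting semi-metrics
`d_i(u,v) = inf_a sqrt((L(a)/i)² + ‖a·u − v‖²)` converge uniformly on compact sets to
`d_∞(u,v) = inf_{a ∈ H} ‖a·u − v‖ = dist(v, closure(H·u))`, which vanishes exactly when
`v` lies in the closure of the orbit `H·u`; hence the quotient metric space is
`ℝⁿ/cl(H)`.  (The rescaling index is `i+1`, running over all positive integers.) -/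
theorem rescaled_holonomic_limit {n : ℕ}
    (H : Subgroup (EuclideanSpace ℝ (Fin n) ≃ₗᵢ[ℝ] EuclideanSpace ℝ (Fin n)))
    (L : H → ℝ) (hL : IsGroupNorm L) (C : ℝ) (hbd : ∀ a : H, L a ≤ C)
    (d : ℕ → EuclideanSpace ℝ (Fin n) → EuclideanSpace ℝ (Fin n) → ℝ)
    (hd : ∀ (i : ℕ) (u v : EuclideanSpace ℝ (Fin n)),
      d i u v = ⨅ a : H, Real.sqrt ((L a / (i + 1)) ^ 2 +
        ‖(a : EuclideanSpace ℝ (Fin n) ≃ₗᵢ[ℝ] EuclideanSpace ℝ (Fin n)) u - v‖ ^ 2))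
    (dscaled : ℕ → EuclideanSpace ℝ (Fin n) → EuclideanSpace ℝ (Fin n) → ℝ)
    (hdscaled : ∀ (i : ℕ) (u v : EuclideanSpace ℝ (Fin n)),
      dscaled i u v = ⨅ a : H, Real.sqrt ((L a / (i + 1)) ^ 2 +
        (‖(a : EuclideanSpace ℝ (Fin n) ≃ₗᵢ[ℝ] EuclideanSpace ℝ (Fin n)) u - v‖ / (i + 1)) ^ 2))
    (dLim : EuclideanSpace ℝ (Fin n) → EuclideanSpace ℝ (Fin n) → ℝ)
    (hdLim : ∀ u v, dLim u v = ⨅ a : H,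
      ‖(a : EuclideanSpace ℝ (Fin n) ≃ₗᵢ[ℝ] EuclideanSpace ℝ (Fin n)) u - v‖) :
    -- the rescaling map `u ↦ (i+1)·u` is an isometry of the scaled holonomic space
    -- onto `(V, H, L/(i+1))` with the original norm:
    (∀ (i : ℕ) (u v : EuclideanSpace ℝ (Fin n)),
      dscaled i (((i : ℝ) + 1) • u) (((i : ℝ) + 1) • v) = d i u v) ∧
    -- uniform convergence on compact sets to `d_∞`:
    (∀ K : Set (EuclideanSpace ℝ (Fin n) × EuclideanSpace ℝ (Fin n)), IsCompact K →
      TendstoUniformlyOn (fun i (p : EuclideanSpace ℝ (Fin n) × EuclideanSpace ℝ (Fin n)) =>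
        d i p.1 p.2) (fun p => dLim p.1 p.2) atTop K) ∧
    -- `d_∞` is the distance to the closure of the orbit of `u` under `H`
    -- (equivalently, under the closure of `H` in `O(n)`):
    (∀ u v : EuclideanSpace ℝ (Fin n),
      dLim u v = Metric.infDist v
        (closure {w | ∃ a : H,
          w = (a : EuclideanSpace ℝ (Fin n) ≃ₗᵢ[ℝ] EuclideanSpace ℝ (Fin n)) u})) ∧
    -- so the associated quotient metric space is `ℝⁿ/cl(H)`:
    (∀ u v : EuclideanSpace ℝ (Fin n),
      dLim u v = 0 ↔ v ∈
        closure {w | ∃ a : H,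
          w = (a : EuclideanSpace ℝ (Fin n) ≃ₗᵢ[ℝ] EuclideanSpace ℝ (Fin n)) u}) := by
  obtain ⟨hL0, hL1, hLinv, hLmul⟩ := hL
  haveI : Nonempty H := ⟨1⟩
  have hC : 0 ≤ C := (hL0 1).trans (hbd 1)
  have hip : ∀ i : ℕ, (0:ℝ) < (i:ℝ) + 1 := fun i => by positivity
  -- bounded below lemma
  have hbdd : ∀ f : H → ℝ, (∀ a, 0 ≤ f a) → BddBelow (Set.range f) := by
    intro f hf
    exact ⟨0, by rintro _ ⟨a, rfl⟩; exact hf a⟩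
  -- lower and upper bounds for d
  have hlow : ∀ i u v, dLim u v ≤ d i u v := by
    intro i u v
    rw [hd, hdLim]
    refine le_ciInf fun a => ?_
    refine (ciInf_le (hbdd _ fun a => norm_nonneg _) a).trans ?_
    exact le_sqrt_sq_add_sq _ _ (norm_nonneg _)
  have hup : ∀ i u v, d i u v ≤ C / (i + 1) + dLim u v := by
    intro i u v
    rw [hd, hdLim]
    rw [← sub_le_iff_le_add']
    apply le_ciInf
    intro a
    rw [sub_le_iff_le_add']
    have step : Real.sqrt ((L a / (i + 1)) ^ 2 +
        ‖(a : EuclideanSpace ℝ (Fin n) ≃ₗᵢ[ℝ] EuclideanSpace ℝ (Fin n)) u - v‖ ^ 2) ≤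
        C / (i + 1) + ‖(a : EuclideanSpace ℝ (Fin n) ≃ₗᵢ[ℝ] EuclideanSpace ℝ (Fin n)) u - v‖ := by
      refine (sqrt_sq_add_sq_le (div_nonneg (hL0 a) (hip i).le) (norm_nonneg _)).trans ?_
      have : L a / (↑i + 1) ≤ C / (↑i + 1) := by gcongr; exact hbd a
      linarith
    exact (ciInf_le (hbdd _ fun b => Real.sqrt_nonneg _) a).trans step
  have hlim0 : ∀ u v, 0 ≤ dLim u v := by
    intro u v
    rw [hdLim]
    exact Real.iInf_nonneg fun a => norm_nonneg _
  -- part 3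
  have part3 : ∀ u v : EuclideanSpace ℝ (Fin n),
      dLim u v = Metric.infDist v
        (closure {w | ∃ a : H,
          w = (a : EuclideanSpace ℝ (Fin n) ≃ₗᵢ[ℝ] EuclideanSpace ℝ (Fin n)) u}) := by
    intro u v
    rw [Metric.infDist_closure, hdLim]
    apply le_antisymm
    · rw [Metric.infDist_eq_iInf]
      haveI : Nonempty ↑{w | ∃ a : H,
          w = (a : EuclideanSpace ℝ (Fin n) ≃ₗᵢ[ℝ] EuclideanSpace ℝ (Fin n)) u} :=
        ⟨⟨_, 1, rfl⟩⟩
      refine le_ciInf fun w => ?_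
      obtain ⟨a, hw⟩ := w.2
      refine (ciInf_le (hbdd _ fun b => norm_nonneg _) a).trans ?_
      rw [hw, dist_eq_norm, norm_sub_rev]
    · refine le_ciInf fun a => ?_
      have : ((a : EuclideanSpace ℝ (Fin n) ≃ₗᵢ[ℝ] EuclideanSpace ℝ (Fin n)) u) ∈
          {w | ∃ b : H, w = (b : EuclideanSpace ℝ (Fin n) ≃ₗᵢ[ℝ] EuclideanSpace ℝ (Fin n)) u} :=
        ⟨a, rfl⟩
      have h2 := Metric.infDist_le_dist_of_mem (x := v) this
      rwa [dist_eq_norm, norm_sub_rev] at h2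
  refine ⟨?_, ?_, part3, ?_⟩
  · -- part 1
    intro i u v
    rw [hdscaled, hd]
    refine iInf_congr fun a => ?_
    congr 2
    rw [map_smul, ← smul_sub, norm_smul, Real.norm_eq_abs, abs_of_pos (hip i)]
    field_simp
  · -- part 2
    intro K _
    rw [Metric.tendstoUniformlyOn_iff]
    intro ε hε
    have htend : Tendsto (fun i : ℕ => C / ((i : ℝ) + 1)) atTop (𝓝 0) :=
      Tendsto.div_atTop tendsto_const_nhds
        (tendsto_atTop_add_const_right _ _ tendsto_natCast_atTop_atTop)
    have h2 : ∀ᶠ i : ℕ in atTop, C / ((i : ℝ) + 1) < ε :=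
      htend.eventually (eventually_lt_nhds hε)
    filter_upwards [h2] with i hi p _
    rw [Real.dist_eq, abs_sub_comm, abs_of_nonneg (by linarith [hlow i p.1 p.2])]
    have := hup i p.1 p.2
    linarith
  · -- part 4
    intro u v
    rw [part3]
    have hne : ({w | ∃ a : H,
        w = (a : EuclideanSpace ℝ (Fin n) ≃ₗᵢ[ℝ] EuclideanSpace ℝ (Fin n)) u}).Nonempty :=
      ⟨_, 1, rfl⟩
    rw [← Metric.mem_closure_iff_infDist_zero hne.closure, closure_closure]
end
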